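/- Each cluster pre-variable x_k (k ∈ ℤ) is a Laurent polynomial in x₁ and x₂ with coefficients in k[p_{1,1},…,p_{1,ℓ₁}, p_{1,ℓ₁}^{-1}, p_{2,1},…,p_{2,ℓ₂}, p_{2,ℓ₂}^{-1}]; that is, x_k lies in the subring k[p_{1,1},…,p_{1,ℓ₁}, p_{1,ℓ₁}^{-1}, p_{2,1},…,p_{2,ℓ₂}, p_{2,ℓ₂}^{-1}][x₁^{±1}, x₂^{±1}] of the rational function field. -/

import Mathlib

attribute [local instance] Classical.propDecidable

noncomputable section

namespace GCA

/-- The variables: `Sum.inl (i, j)` is the coefficient indeterminate `p_{i+1,j}` (only those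
with `1 ≤ j ≤ ℓ_{i+1}` are used), and `Sum.inr i` is the cluster variable `x_{i+1}`. -/
abbrev Vars := (Fin 2 × ℕ) ⊕ Fin 2

/-- The ambient rational function field `k(p_{1,1},…,p_{2,ℓ₂})(x₁,x₂)`. -/
abbrev FF (K : Type) [Field K] := FractionRing (MvPolynomial Vars K)

variable (K : Type) [Field K]

/-- The image in `FF K` of a polynomial variable. -/
def ev (v : Vars) : FF K := algebraMap (MvPolynomial Vars K) (FF K) (MvPolynomial.X v)

/-- The coefficient indeterminate `p_{i+1,j}` (for `i : Fin 2`, `j ≥ 1`). -/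
def p (i : Fin 2) (j : ℕ) : FF K := ev K (.inl (i, j))

/-- The initial cluster variable `x₁`. -/
def x1 : FF K := ev K (.inr 0)

/-- The initial cluster variable `x₂`. -/
def x2 : FF K := ev K (.inr 1)

/-- The image of the ground field `k` in `FF K`. -/
def KImage : Set (FF K) :=
  Set.range fun c : K => algebraMap (MvPolynomial Vars K) (FF K) (MvPolynomial.C c)

/-- The set of coefficient indeterminates `p_{1,1},…,p_{1,ℓ₁},p_{2,1},…,p_{2,ℓ₂}`. -/
def pGens (ℓ₁ ℓ₂ : ℕ) : Set (FF K) :=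
  (fun j => p K 0 j) '' Set.Icc 1 ℓ₁ ∪ (fun j => p K 1 j) '' Set.Icc 1 ℓ₂

variable (ℓ₁ ℓ₂ : ℕ)

/-- The exchange polynomial `P₁(z) = 1 + p_{1,1}z + ⋯ + p_{1,ℓ₁}z^{ℓ₁}`. -/
def P1 (z : FF K) : FF K := 1 + ∑ j ∈ Finset.Icc 1 ℓ₁, p K 0 j * z ^ j

/-- The exchange polynomial `P₂(z) = 1 + p_{2,1}z + ⋯ + p_{2,ℓ₂}z^{ℓ₂}`. -/
def P2 (z : FF K) : FF K := 1 + ∑ j ∈ Finset.Icc 1 ℓ₂, p K 1 j * z ^ j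

/-- `P̄₁(z) = p_{1,ℓ₁}^{-1}·z^{ℓ₁}·P₁(z^{-1})`. -/
def P1bar (z : FF K) : FF K := (p K 0 ℓ₁)⁻¹ * z ^ ℓ₁ * P1 K ℓ₁ z⁻¹

/-- `P̄₂(z) = p_{2,ℓ₂}^{-1}·z^{ℓ₂}·P₂(z^{-1})`. -/
def P2bar (z : FF K) : FF K := (p K 1 ℓ₂)⁻¹ * z ^ ℓ₂ * P2 K ℓ₂ z⁻¹

/-- `x : ℤ → FF K` is the family of cluster pre-variables: `x 1 = x₁`, `x 2 = x₂`, and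
`x_{k+1}·x_{k−1} = P₁(x_k), P₂(x_k), P̄₁(x_k), P̄₂(x_k)` according as
`k ≡ 1, 2, 3, 0 (mod 4)`. -/
def IsPreVarSeq (x : ℤ → FF K) : Prop :=
  x 1 = x1 K ∧ x 2 = x2 K ∧ ∀ k : ℤ,
    x (k + 1) * x (k - 1) =
      if k % 4 = 1 then P1 K ℓ₁ (x k)
      else if k % 4 = 2 then P2 K ℓ₂ (x k)
      else if k % 4 = 3 then P1bar K ℓ₁ (x k)
      else P2bar K ℓ₂ (x k)

/-- The coefficient ring `k[p_{1,1},…,p_{1,ℓ₁},p_{1,ℓ₁}^{-1},p_{2,1},…,p_{2,ℓ₂},p_{2,ℓ₂}^{-1}]`,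
as a subring of `FF K`. -/
def CoeffRing : Subring (FF K) :=
  Subring.closure (KImage K ∪ pGens K ℓ₁ ℓ₂ ∪ {(p K 0 ℓ₁)⁻¹, (p K 1 ℓ₂)⁻¹})

/-- The Laurent polynomial ring
`k[p_{1,1},…,p_{1,ℓ₁},p_{1,ℓ₁}^{-1},p_{2,1},…,p_{2,ℓ₂},p_{2,ℓ₂}^{-1}][x₁^{±1},x₂^{±1}]`,
as a subring of `FF K`. -/
def LaurentRing : Subring (FF K) :=
  Subring.closure (KImage K ∪ pGens K ℓ₁ ℓ₂ ∪
    {(p K 0 ℓ₁)⁻¹, (p K 1 ℓ₂)⁻¹, x1 K, (x1 K)⁻¹, x2 K, (x2 K)⁻¹})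

end GCA

/-!
All `x_k` are nonzero, being quotients of polynomials with nonnegative coefficients.
Walking away from the initial seed in either direction, write each `x_k` as `n_k · u_k / v_k`
with `u_k, v_k` monomials in the invertible generators `x₁, x₂, p_{1,ℓ₁}, p_{2,ℓ₂}` and the
polynomial `n_k` divisible by none of them. Inductively, consecutive numerators `n_k, n_{k+1}`
are coprime and each divides the homogenized exchange polynomial evaluated at the other.
Because the exchange polynomials at `k - 1` and `k + 1` are reverses of each other, the exchange
relation at `k` carries `n_k ∣ E_{k-1}(x_{k-1})` over to `n_k ∣ E_{k+1}(x_{k+1})`; hence `n_k`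
cancels from `x_{k+2} = E_{k+1}(x_{k+1}) / x_k`, and the monomials left in the denominator are
units of the Laurent ring.
-/

namespace GCA

open Finset

section Factorization

lemma isRelPrime_of_forall_not_dvd {M : Type*} [CommMonoid M] [DecompositionMonoid M]
    {S : Set M} (hS : ∀ s ∈ S, Irreducible s) {n μ : M} (hn : ∀ s ∈ S, ¬s ∣ n)
    (hμ : μ ∈ Submonoid.closure S) : IsRelPrime n μ := by
  induction hμ using Submonoid.closure_induction with
  | mem s hs => exact ((hS s hs).isRelPrime_iff_not_dvd.mpr (hn s hs)).symm
  | one => exact isRelPrime_one_right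
  | mul _ _ _ _ h h' => exact h.mul_right h'

lemma exists_eq_mul_of_forall_not_dvd {M : Type*} [CommMonoidWithZero M] [WfDvdMonoid M]
    {S : Set M} (hS : ∀ s ∈ S, ¬IsUnit s) {h : M} (h0 : h ≠ 0) :
    ∃ μ ∈ Submonoid.closure S, ∃ n, (∀ s ∈ S, ¬s ∣ n) ∧ h = μ * n := by
  obtain ⟨n, ⟨μ, hμ, rfl⟩, hmin⟩ := wellFounded_dvdNotUnit.has_min
    {n | ∃ μ ∈ Submonoid.closure S, h = μ * n} ⟨h, 1, one_mem _, (one_mul h).symm⟩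
  refine ⟨μ, hμ, n, fun s hs ⟨n', hn'⟩ => hmin n' ⟨μ * s, ?_, ?_⟩ ⟨?_, s, hS s hs, ?_⟩, rfl⟩
  · exact mul_mem hμ (Submonoid.subset_closure hs)
  · rw [hn', mul_assoc]
  · rintro rfl
    simp [hn'] at h0
  · rw [hn', mul_comm]

end Factorization

section HomEval

variable {R : Type*} [CommRing R]

/-- The homogenization `b ^ d * f (a / b)` of `f = ∑_{j ≤ d} c j X ^ j`. -/
def homEval (c : ℕ → R) (d : ℕ) (a b : R) : R :=
  ∑ j ∈ range (d + 1), c j * a ^ j * b ^ (d - j)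

lemma dvd_homEval_sub {c : ℕ → R} {d : ℕ} {a b N : R} (h : N ∣ a) :
    N ∣ homEval c d a b - c 0 * b ^ d := by
  rw [homEval, sum_range_succ', pow_zero, mul_one, Nat.sub_zero, add_sub_cancel_right]
  exact dvd_sum fun j _ => ((h.pow j.succ_ne_zero).mul_left _).mul_right _

lemma sub_dvd_homEval_sub_homEval {c c' : ℕ → R} {d : ℕ} (hc : ∀ j ≤ d, c' (d - j) = c j)
    (a b a' b' : R) :
    a * a' - b * b' ∣ a' ^ d * homEval c d a b - b ^ d * homEval c' d a' b' := by
  have h : a' ^ d * homEval c d a b - b ^ d * homEval c' d a' b' =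
      ∑ j ∈ range (d + 1), c j * (a' * b) ^ (d - j) * ((a * a') ^ j - (b * b') ^ j) := by
    rw [homEval, homEval, mul_sum, mul_sum,
      ← sum_range_reflect (fun j => b ^ d * (c' j * a' ^ j * b' ^ (d - j))), ← sum_sub_distrib]
    refine sum_congr rfl fun j hj => ?_
    have hj : j ≤ d := Nat.lt_succ_iff.mp (mem_range.mp hj)
    have hcj := hc j hj
    obtain ⟨e, rfl⟩ : ∃ e, d = j + e := ⟨d - j, by omega⟩
    simp only [show j + e + 1 - 1 - j = e by omega, show j + e - e = j by omega,
      Nat.add_sub_cancel_left] at hcj ⊢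
    rw [hcj]
    ring
  rw [h]
  exact dvd_sum fun j _ => (sub_dvd_pow_sub_pow _ _ j).mul_left _

/-- Modulo `N` the exchange relation gives `a₂ a₀ ≡ b₂ b₀`, under which
`a₀ ^ d · homEval c d a₂ b₂ ≡ b₂ ^ d · homEval c' d a₀ b₀` because `c` is the reverse of `c'`. -/
lemma dvd_homEval_of_exchange [DecompositionMonoid R] {c c' g : ℕ → R} {d e : ℕ}
    (hc : ∀ j ≤ d, c' (d - j) = c j) {N a b a₂ b₂ a₀ b₀ : R} (hNa : N ∣ a)
    (hN : IsRelPrime N (g 0 * b ^ e)) (hN₀ : IsRelPrime N a₀)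
    (hexch : g 0 * b ^ e * (a₂ * a₀) = b₂ * b₀ * homEval g e a b)
    (hdvd : N ∣ homEval c' d a₀ b₀) : N ∣ homEval c d a₂ b₂ := by
  have hcong : N ∣ a₂ * a₀ - b₂ * b₀ := by
    refine hN.dvd_of_dvd_mul_left ?_
    rw [show g 0 * b ^ e * (a₂ * a₀ - b₂ * b₀) =
      b₂ * b₀ * (homEval g e a b - g 0 * b ^ e) by linear_combination hexch]
    exact (dvd_homEval_sub hNa).mul_left _
  have h := dvd_add (hcong.trans (sub_dvd_homEval_sub_homEval hc a₂ b₂ a₀ b₀))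
    (hdvd.mul_left (b₂ ^ d))
  rw [sub_add_cancel] at h
  exact hN₀.pow_right.dvd_of_dvd_mul_left h

lemma map_homEval {F : Type*} [Field F] (φ : R →+* F) (c : ℕ → R) (d : ℕ) (a b : R)
    (hb : φ b ≠ 0) :
    φ (homEval c d a b) = φ b ^ d * ∑ j ∈ range (d + 1), φ (c j) * (φ a / φ b) ^ j := by
  rw [homEval, map_sum, mul_sum]
  refine sum_congr rfl fun j hj => ?_
  obtain ⟨e, rfl⟩ : ∃ e, d = j + e := ⟨d - j, by have := mem_range.mp hj; omega⟩
  rw [Nat.add_sub_cancel_left, div_pow, pow_add]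
  field_simp
  simp only [map_mul, map_pow]
  ring

lemma sum_range_reflect_mul_pow {F : Type*} [Field F] (f : ℕ → F) (d : ℕ) {z : F}
    (hz : z ≠ 0) :
    ∑ j ∈ range (d + 1), f (d - j) * z ^ j = z ^ d * ∑ j ∈ range (d + 1), f j * z⁻¹ ^ j := by
  rw [mul_sum, ← sum_range_reflect (fun j => f (d - j) * z ^ j)]
  refine sum_congr rfl fun j hj => ?_
  obtain ⟨e, rfl⟩ : ∃ e, d = j + e := ⟨d - j, by have := mem_range.mp hj; omega⟩
  simp only [show j + e + 1 - 1 - j = e by omega, show j + e - e = j by omega, pow_add, inv_pow]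
  field_simp

end HomEval

section ReducedRep

variable {R F : Type*} [CommRing R] [Field F] (φ : R →+* F) (S : Set R)

def IsReducedRep (y : F) (n u v : R) : Prop :=
  (∀ s ∈ S, ¬s ∣ n) ∧ u ∈ Submonoid.closure S ∧ v ∈ Submonoid.closure S ∧ y = φ n * φ u / φ v

def IsGoodPair (y : ℕ → F) (c : ℕ → ℕ → R) (d : ℕ → ℕ) (κ : ℕ) : Prop :=
  ∃ n u v n' u' v', IsReducedRep φ S (y κ) n u v ∧ IsReducedRep φ S (y (κ + 1)) n' u' v' ∧
    IsRelPrime n n' ∧ n ∣ homEval (c (κ + 1)) (d (κ + 1)) (n' * u') v' ∧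
    n' ∣ homEval (c κ) (d κ) (n * u) v

variable {φ S}

lemma isGoodPair_zero (hS : ∀ s ∈ S, Irreducible s) {y : ℕ → F} {c : ℕ → ℕ → R}
    {d : ℕ → ℕ} (hy₀ : y 0 ∈ (Submonoid.closure S).map φ)
    (hy₁ : y 1 ∈ (Submonoid.closure S).map φ) : IsGoodPair φ S y c d 0 := by
  obtain ⟨μ₀, hμ₀, hy₀⟩ := hy₀
  obtain ⟨μ₁, hμ₁, hy₁⟩ := hy₁
  have hone : ∀ s ∈ S, ¬s ∣ 1 := fun s hs h => (hS s hs).1 (isUnit_of_dvd_one h)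
  refine ⟨1, μ₀, 1, 1, μ₁, 1, ⟨hone, hμ₀, one_mem _, by simp [← hy₀]⟩,
    ⟨hone, hμ₁, one_mem _, by simp [← hy₁]⟩, isRelPrime_one_left, one_dvd _, one_dvd _⟩

lemma map_ne_zero_of_mem_closure [IsDomain R] (hφ : Function.Injective φ)
    (hS : ∀ s ∈ S, Irreducible s) {μ : R} (hμ : μ ∈ Submonoid.closure S) : φ μ ≠ 0 := by
  have hμ0 : μ ≠ 0 := nonZeroDivisors.ne_zero <| (Submonoid.closure_le.mpr fun s hs =>
    mem_nonZeroDivisors_of_ne_zero (hS s hs).ne_zero) hμ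
  exact (map_ne_zero_iff φ hφ).mpr hμ0

variable [IsDomain R] [DecompositionMonoid R] [WfDvdMonoid R]

/-- `homEval c d (n * u) v` is the numerator of `y₂ * y₀`, so the hypothesis on `n₀` lets it
cancel against the numerator of `y₀`. -/
lemma exists_isReducedRep_of_exchange (hφ : Function.Injective φ)
    (hS : ∀ s ∈ S, Irreducible s) {c : ℕ → R} {d : ℕ} (hc : c 0 ∈ Submonoid.closure S)
    {y₀ y y₂ : F} (hy₀ : y₀ ≠ 0) (hy₂ : y₂ ≠ 0)
    (hrel : y₂ * y₀ * φ (c 0) = ∑ j ∈ range (d + 1), φ (c j) * y ^ j)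
    {n₀ u₀ v₀ n u v : R} (h₀ : IsReducedRep φ S y₀ n₀ u₀ v₀) (h : IsReducedRep φ S y n u v)
    (hdvd : n₀ ∣ homEval c d (n * u) v) :
    ∃ n₂ u₂ v₂, IsReducedRep φ S y₂ n₂ u₂ v₂ ∧ IsRelPrime n n₂ ∧
      n₂ ∣ homEval c d (n * u) v ∧
      c 0 * v ^ d * (n₂ * u₂ * (n₀ * u₀)) = v₂ * v₀ * homEval c d (n * u) v := by
  obtain ⟨-, hu₀, hv₀, rfl⟩ := h₀
  obtain ⟨-, -, hv, rfl⟩ := h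
  have hφv := map_ne_zero_of_mem_closure hφ hS hv
  have hφv₀ := map_ne_zero_of_mem_closure hφ hS hv₀
  have hφc := map_ne_zero_of_mem_closure hφ hS hc
  have hE : φ (homEval c d (n * u) v) =
      y₂ * (φ n₀ * φ u₀ / φ v₀) * φ (c 0) * φ v ^ d := by
    rw [map_homEval φ c d _ _ hφv, hrel, map_mul, mul_comm]
  obtain ⟨t, ht⟩ := hdvd
  have ht0 : t ≠ 0 := by
    rintro rfl
    rw [ht, mul_zero, map_zero] at hE
    exact (mul_ne_zero (mul_ne_zero (mul_ne_zero hy₂ hy₀) hφc) (pow_ne_zero d hφv)) hE.symm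
  obtain ⟨μ, hμ, n₂, hn₂, rfl⟩ := exists_eq_mul_of_forall_not_dvd (fun s hs => (hS s hs).1) ht0
  have hM : c 0 * v ^ d ∈ Submonoid.closure S := mul_mem hc (pow_mem hv d)
  refine ⟨n₂, μ * v₀, c 0 * v ^ d * u₀, ⟨hn₂, mul_mem hμ hv₀, mul_mem hM hu₀, ?_⟩, ?_,
    ⟨n₀ * μ, by rw [ht]; ring⟩, by rw [ht]; ring⟩
  · have hφn₀ : φ n₀ ≠ 0 := fun h0 => hy₀ (by rw [h0, zero_mul, zero_div])
    have hφu₀ : φ u₀ ≠ 0 := fun h0 => hy₀ (by rw [h0, mul_zero, zero_div])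
    rw [ht] at hE
    simp only [map_mul, map_pow] at hE ⊢
    field_simp
    field_simp at hE
    linear_combination -hE
  · intro δ hδn hδn₂
    have hδE : δ ∣ homEval c d (n * u) v := ht ▸ (hδn₂.mul_left μ).mul_left n₀
    have hδM : δ ∣ c 0 * v ^ d := by
      simpa using dvd_sub hδE (dvd_homEval_sub (c := c) (d := d) (b := v) (hδn.mul_right u))
    exact isRelPrime_of_forall_not_dvd hS hn₂ hM hδn₂ hδM

lemma IsGoodPair.succ (hφ : Function.Injective φ) (hS : ∀ s ∈ S, Irreducible s)
    {y : ℕ → F} {c : ℕ → ℕ → R} {d : ℕ → ℕ} {κ : ℕ}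
    (hrev : ∀ j ≤ d κ, c (κ + 2) j = c κ (d κ - j)) (hd : d (κ + 2) = d κ)
    (hc : c (κ + 1) 0 ∈ Submonoid.closure S) (hy₀ : y κ ≠ 0) (hy₂ : y (κ + 2) ≠ 0)
    (hrel : y (κ + 2) * y κ * φ (c (κ + 1) 0) =
      ∑ j ∈ range (d (κ + 1) + 1), φ (c (κ + 1) j) * y (κ + 1) ^ j)
    (hκ : IsGoodPair φ S y c d κ) : IsGoodPair φ S y c d (κ + 1) := by
  obtain ⟨n₀, u₀, v₀, n, u, v, h₀, h, hcop, hdvd₀, hdvd⟩ := hκ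
  obtain ⟨n₂, u₂, v₂, h₂, hcop₂, hdvd₂, hexch⟩ :=
    exists_isReducedRep_of_exchange hφ hS hc hy₀ hy₂ hrel h₀ h hdvd₀
  refine ⟨n, u, v, n₂, u₂, v₂, h, h₂, hcop₂, ?_, hdvd₂⟩
  refine dvd_homEval_of_exchange (c' := c κ) (fun j hj => ?_) (dvd_mul_right n u)
    (isRelPrime_of_forall_not_dvd hS h.1 (mul_mem hc (pow_mem h.2.2.1 _)))
    (hcop.symm.mul_right (isRelPrime_of_forall_not_dvd hS h.1 h₀.2.1)) hexch (hd ▸ hdvd)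
  rw [hd] at hj ⊢
  exact (hrev j hj).symm

theorem exists_isReducedRep (hφ : Function.Injective φ) (hS : ∀ s ∈ S, Irreducible s)
    {y : ℕ → F} {c : ℕ → ℕ → R} {d : ℕ → ℕ}
    (hrev : ∀ κ, ∀ j ≤ d κ, c (κ + 2) j = c κ (d κ - j)) (hd : ∀ κ, d (κ + 2) = d κ)
    (hc : ∀ κ, c κ 0 ∈ Submonoid.closure S) (hy : ∀ κ, y κ ≠ 0)
    (hrel : ∀ κ, y (κ + 2) * y κ * φ (c (κ + 1) 0) =
      ∑ j ∈ range (d (κ + 1) + 1), φ (c (κ + 1) j) * y (κ + 1) ^ j)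
    (hy₀ : y 0 ∈ (Submonoid.closure S).map φ) (hy₁ : y 1 ∈ (Submonoid.closure S).map φ)
    (κ : ℕ) : ∃ n u v, IsReducedRep φ S (y κ) n u v := by
  have hpair : IsGoodPair φ S y c d κ := by
    induction κ with
    | zero => exact isGoodPair_zero hS hy₀ hy₁
    | succ κ ih => exact ih.succ hφ hS (hrev κ) (hd κ) (hc _) (hy _) (hy _) (hrel κ)
  obtain ⟨n, u, v, -, -, -, h, -⟩ := hpair
  exact ⟨n, u, v, h⟩

end ReducedRep

section SubtractionFree

variable (K : Type) [Field K] [CharZero K]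

def nnratPolyToFF : MvPolynomial Vars ℚ≥0 →+* FF K :=
  (algebraMap (MvPolynomial Vars K) (FF K)).comp (MvPolynomial.map (NNRat.castHom K))

lemma nnratPolyToFF_injective : Function.Injective (nnratPolyToFF K) :=
  (IsFractionRing.injective (MvPolynomial Vars K) (FF K)).comp
    (MvPolynomial.map_injective _ NNRat.cast_injective)

def subtractionFree : Subsemiring (FF K) where
  carrier := {y | ∃ f g, g ≠ 0 ∧ y = nnratPolyToFF K f / nnratPolyToFF K g}
  zero_mem' := ⟨0, 1, one_ne_zero, by simp⟩
  one_mem' := ⟨1, 1, one_ne_zero, by simp⟩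
  add_mem' := by
    rintro _ _ ⟨f, g, hg, rfl⟩ ⟨f', g', hg', rfl⟩
    have := (map_ne_zero_iff _ (nnratPolyToFF_injective K)).mpr hg
    have := (map_ne_zero_iff _ (nnratPolyToFF_injective K)).mpr hg'
    exact ⟨f * g' + f' * g, g * g', mul_ne_zero hg hg', by simp only [map_add, map_mul]; field_simp⟩
  mul_mem' := by
    rintro _ _ ⟨f, g, hg, rfl⟩ ⟨f', g', hg', rfl⟩
    exact ⟨f * f', g * g', mul_ne_zero hg hg', by simp only [map_mul]; ring⟩

variable {K}

lemma inv_mem_subtractionFree {y : FF K} (hy : y ∈ subtractionFree K) :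
    y⁻¹ ∈ subtractionFree K := by
  obtain ⟨f, g, hg, rfl⟩ := hy
  rcases eq_or_ne f 0 with rfl | hf
  · simp
  · exact ⟨g, f, hf, inv_div _ _⟩

lemma one_add_ne_zero_of_mem_subtractionFree {y : FF K} (hy : y ∈ subtractionFree K) :
    1 + y ≠ 0 := by
  obtain ⟨f, g, hg, rfl⟩ := hy
  have hψ := nnratPolyToFF_injective K
  have hgf : g + f ≠ 0 := fun h => hg <| MvPolynomial.ext _ _ fun m =>
    (add_eq_zero.mp (by rw [← MvPolynomial.coeff_add, h, MvPolynomial.coeff_zero])).1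
  rw [one_add_div ((map_ne_zero_iff _ hψ).mpr hg), ← map_add]
  exact div_ne_zero ((map_ne_zero_iff _ hψ).mpr hgf) ((map_ne_zero_iff _ hψ).mpr hg)

lemma ev_mem_subtractionFree (v : Vars) : ev K v ∈ subtractionFree K :=
  ⟨MvPolynomial.X v, 1, one_ne_zero, by simp [ev, nnratPolyToFF]⟩

end SubtractionFree

section ExchangeSeq

variable (K : Type) [Field K] (ℓ₁ ℓ₂ : ℕ)

/-- `exchPoly K ℓ₁ ℓ₂ 0 = P1 K ℓ₁` and `exchPoly K ℓ₁ ℓ₂ 1 = P2 K ℓ₂`. -/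
def exchPoly (i : Fin 2) (z : FF K) : FF K :=
  1 + ∑ j ∈ Icc 1 (![ℓ₁, ℓ₂] i), p K i j * z ^ j

def exchPolyBar (i : Fin 2) (z : FF K) : FF K :=
  (p K i (![ℓ₁, ℓ₂] i))⁻¹ * z ^ (![ℓ₁, ℓ₂] i) * exchPoly K ℓ₁ ℓ₂ i z⁻¹

def exchIndex (a b : Fin 2) (κ : ℕ) : Fin 2 := if κ % 2 = 0 then a else b

/-- The exchange polynomials `P_a, P_b, P̄_a, P̄_b, P_a, …` at `κ = 0, 1, 2, 3, 4, …`. -/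
def exchRhs (a b : Fin 2) (κ : ℕ) (z : FF K) : FF K :=
  if κ % 4 < 2 then exchPoly K ℓ₁ ℓ₂ (exchIndex a b κ) z
  else exchPolyBar K ℓ₁ ℓ₂ (exchIndex a b κ) z

/-- A one-sided sequence of cluster pre-variables starting from `x_{a+1}, x_{b+1}`;
`n ↦ x (n + 1)` is one for `(a, b) = (0, 1)` and `n ↦ x (2 - n)` for `(a, b) = (1, 0)`. -/
def IsExchangeSeq (a b : Fin 2) (y : ℕ → FF K) : Prop :=
  y 0 = ev K (.inr a) ∧ y 1 = ev K (.inr b) ∧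
    ∀ κ, y (κ + 2) * y κ = exchRhs K ℓ₁ ℓ₂ a b (κ + 1) (y (κ + 1))

variable {K ℓ₁ ℓ₂}

lemma ev_ne_zero (v : Vars) : ev K v ≠ 0 :=
  (map_ne_zero_iff _ (IsFractionRing.injective (MvPolynomial Vars K) (FF K))).mpr
    (MvPolynomial.X_ne_zero v)

lemma IsPreVarSeq.isExchangeSeq_succ {x : ℤ → FF K} (hx : IsPreVarSeq K ℓ₁ ℓ₂ x) :
    IsExchangeSeq K ℓ₁ ℓ₂ 0 1 (fun n => x (n + 1)) := by
  refine ⟨by simpa [x1] using hx.1, by simpa [x2, one_add_one_eq_two] using hx.2.1, fun κ => ?_⟩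
  have h := hx.2.2 (κ + 2)
  rw [show (κ : ℤ) + 2 - 1 = κ + 1 by ring] at h
  simp only [Nat.cast_add, Nat.cast_ofNat, Nat.cast_one] at h ⊢
  rw [add_assoc (κ : ℤ) 1 1, one_add_one_eq_two, h]
  have : κ % 4 = 0 ∨ κ % 4 = 1 ∨ κ % 4 = 2 ∨ κ % 4 = 3 := by omega
  rcases this with h4 | h4 | h4 | h4 <;>
  · simp [exchRhs, exchIndex, show ((κ : ℤ) + 2) % 4 = ((κ % 4 + 2) % 4 : ℕ) by omega,
      show (κ + 1) % 4 = (κ % 4 + 1) % 4 by omega, show (κ + 1) % 2 = (κ % 4 + 1) % 2 by omega, h4]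
    rfl

lemma IsPreVarSeq.isExchangeSeq_two_sub {x : ℤ → FF K} (hx : IsPreVarSeq K ℓ₁ ℓ₂ x) :
    IsExchangeSeq K ℓ₁ ℓ₂ 1 0 (fun n => x (2 - n)) := by
  refine ⟨by simpa [x2] using hx.2.1, by simpa [x1] using hx.1, fun κ => ?_⟩
  have h := hx.2.2 (1 - κ)
  rw [show 1 - (κ : ℤ) + 1 = 2 - κ by ring, show 1 - (κ : ℤ) - 1 = 2 - (κ + 2) by ring] at h
  simp only [Nat.cast_add, Nat.cast_ofNat, Nat.cast_one] at h ⊢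
  rw [show 2 - ((κ : ℤ) + 1) = 1 - κ by ring, mul_comm, h]
  have : κ % 4 = 0 ∨ κ % 4 = 1 ∨ κ % 4 = 2 ∨ κ % 4 = 3 := by omega
  rcases this with h4 | h4 | h4 | h4 <;>
  · simp [exchRhs, exchIndex, show (1 - (κ : ℤ)) % 4 = ((5 - κ % 4) % 4 : ℕ) by omega,
      show (κ + 1) % 4 = (κ % 4 + 1) % 4 by omega, show (κ + 1) % 2 = (κ % 4 + 1) % 2 by omega, h4]
    rfl

section Positivity

variable [CharZero K]

lemma sum_mem_subtractionFree (i : Fin 2) {z : FF K} (hz : z ∈ subtractionFree K) :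
    ∑ j ∈ Icc 1 (![ℓ₁, ℓ₂] i), p K i j * z ^ j ∈ subtractionFree K :=
  sum_mem fun j _ => mul_mem (ev_mem_subtractionFree _) (pow_mem hz j)

lemma exchPoly_mem_subtractionFree (i : Fin 2) {z : FF K} (hz : z ∈ subtractionFree K) :
    exchPoly K ℓ₁ ℓ₂ i z ∈ subtractionFree K :=
  add_mem (one_mem _) (sum_mem_subtractionFree i hz)

lemma exchPoly_ne_zero (i : Fin 2) {z : FF K} (hz : z ∈ subtractionFree K) :
    exchPoly K ℓ₁ ℓ₂ i z ≠ 0 :=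
  one_add_ne_zero_of_mem_subtractionFree (sum_mem_subtractionFree i hz)

lemma exchRhs_mem_subtractionFree (a b : Fin 2) (κ : ℕ) {z : FF K}
    (hz : z ∈ subtractionFree K) : exchRhs K ℓ₁ ℓ₂ a b κ z ∈ subtractionFree K := by
  unfold exchRhs exchPolyBar
  split_ifs
  · exact exchPoly_mem_subtractionFree _ hz
  · exact mul_mem (mul_mem (inv_mem_subtractionFree (ev_mem_subtractionFree _)) (pow_mem hz _))
      (exchPoly_mem_subtractionFree _ (inv_mem_subtractionFree hz))

lemma exchRhs_ne_zero (a b : Fin 2) (κ : ℕ) {z : FF K} (hz : z ∈ subtractionFree K)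
    (hz₀ : z ≠ 0) : exchRhs K ℓ₁ ℓ₂ a b κ z ≠ 0 := by
  unfold exchRhs exchPolyBar
  split_ifs
  · exact exchPoly_ne_zero _ hz
  · exact mul_ne_zero (mul_ne_zero (inv_ne_zero (ev_ne_zero _)) (pow_ne_zero _ hz₀))
      (exchPoly_ne_zero _ (inv_mem_subtractionFree hz))

lemma IsExchangeSeq.mem_subtractionFree_and_ne_zero {a b : Fin 2} {y : ℕ → FF K}
    (hy : IsExchangeSeq K ℓ₁ ℓ₂ a b y) (κ : ℕ) : y κ ∈ subtractionFree K ∧ y κ ≠ 0 := by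
  suffices h : ∀ κ, (y κ ∈ subtractionFree K ∧ y κ ≠ 0) ∧
      (y (κ + 1) ∈ subtractionFree K ∧ y (κ + 1) ≠ 0) from (h κ).1
  intro κ
  induction κ with
  | zero =>
    rw [hy.1, hy.2.1]
    exact ⟨⟨ev_mem_subtractionFree _, ev_ne_zero _⟩, ev_mem_subtractionFree _, ev_ne_zero _⟩
  | succ κ ih =>
    obtain ⟨⟨hmem₀, hne₀⟩, hmem₁, hne₁⟩ := ih
    have hy₂ : y (κ + 2) = exchRhs K ℓ₁ ℓ₂ a b (κ + 1) (y (κ + 1)) * (y κ)⁻¹ := by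
      rw [← div_eq_mul_inv, eq_div_of_mul_eq hne₀ (hy.2.2 κ)]
    refine ⟨⟨hmem₁, hne₁⟩, ?_, ?_⟩ <;> rw [hy₂]
    · exact mul_mem (exchRhs_mem_subtractionFree a b _ hmem₁) (inv_mem_subtractionFree hmem₀)
    · exact mul_ne_zero (exchRhs_ne_zero a b _ hmem₁ hne₁) (inv_ne_zero hne₀)

end Positivity

end ExchangeSeq

section LaurentPoly

variable (K : Type) [Field K] (ℓ₁ ℓ₂ : ℕ)

def IsLaurentVar : Vars → Prop
  | .inl (i, j) => 1 ≤ j ∧ j ≤ ![ℓ₁, ℓ₂] i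
  | .inr _ => True

abbrev LaurentPoly := MvPolynomial {v : Vars // IsLaurentVar ℓ₁ ℓ₂ v} K

def laurentPolyToFF : LaurentPoly K ℓ₁ ℓ₂ →+* FF K :=
  (algebraMap (MvPolynomial Vars K) (FF K)).comp (MvPolynomial.rename Subtype.val).toRingHom

/-- Namely `x₁`, `x₂`, `p_{1,ℓ₁}` and `p_{2,ℓ₂}`. -/
def invertedVars : Set (LaurentPoly K ℓ₁ ℓ₂) :=
  {f | ∃ v, f = MvPolynomial.X v ∧ (ev K v.1)⁻¹ ∈ LaurentRing K ℓ₁ ℓ₂}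

variable {K ℓ₁ ℓ₂}

lemma laurentPolyToFF_injective : Function.Injective (laurentPolyToFF K ℓ₁ ℓ₂) :=
  (IsFractionRing.injective (MvPolynomial Vars K) (FF K)).comp
    (MvPolynomial.rename_injective _ Subtype.val_injective)

@[simp]
lemma laurentPolyToFF_X (v : {v : Vars // IsLaurentVar ℓ₁ ℓ₂ v}) :
    laurentPolyToFF K ℓ₁ ℓ₂ (MvPolynomial.X v) = ev K v.1 := by
  simp [laurentPolyToFF, ev]

lemma ev_mem_laurentRing {v : Vars} (hv : IsLaurentVar ℓ₁ ℓ₂ v) :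
    ev K v ∈ LaurentRing K ℓ₁ ℓ₂ := by
  apply Subring.subset_closure
  rcases v with ⟨i, j⟩ | i <;> fin_cases i
  · exact .inl (.inr (.inl ⟨j, hv, rfl⟩))
  · exact .inl (.inr (.inr ⟨j, hv, rfl⟩))
  · exact .inr (by simp [x1])
  · exact .inr (by simp [x2])

lemma laurentPolyToFF_mem_laurentRing (f : LaurentPoly K ℓ₁ ℓ₂) :
    laurentPolyToFF K ℓ₁ ℓ₂ f ∈ LaurentRing K ℓ₁ ℓ₂ := by
  induction f using MvPolynomial.induction_on with
  | C a => exact Subring.subset_closure (.inl (.inl ⟨a, by simp [laurentPolyToFF]⟩))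
  | add f g hf hg => exact map_add (laurentPolyToFF K ℓ₁ ℓ₂) f g ▸ add_mem hf hg
  | mul_X f v hf =>
    rw [map_mul, laurentPolyToFF_X]
    exact mul_mem hf (ev_mem_laurentRing v.2)

lemma irreducible_of_mem_invertedVars {f : LaurentPoly K ℓ₁ ℓ₂}
    (hf : f ∈ invertedVars K ℓ₁ ℓ₂) : Irreducible f := by
  obtain ⟨v, rfl, -⟩ := hf
  exact MvPolynomial.X_prime.irreducible

lemma inv_laurentPolyToFF_mem_laurentRing {μ : LaurentPoly K ℓ₁ ℓ₂}
    (hμ : μ ∈ Submonoid.closure (invertedVars K ℓ₁ ℓ₂)) :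
    (laurentPolyToFF K ℓ₁ ℓ₂ μ)⁻¹ ∈ LaurentRing K ℓ₁ ℓ₂ := by
  induction hμ using Submonoid.closure_induction with
  | mem f hf =>
    obtain ⟨v, rfl, hv⟩ := hf
    rwa [laurentPolyToFF_X]
  | one => simp
  | mul f g _ _ hf hg => exact (map_mul (laurentPolyToFF K ℓ₁ ℓ₂) f g ▸ mul_inv _ _) ▸ mul_mem hf hg

lemma IsReducedRep.mem_laurentRing {y : FF K} {n u v : LaurentPoly K ℓ₁ ℓ₂}
    (h : IsReducedRep (laurentPolyToFF K ℓ₁ ℓ₂) (invertedVars K ℓ₁ ℓ₂) y n u v) :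
    y ∈ LaurentRing K ℓ₁ ℓ₂ := by
  rw [h.2.2.2, div_eq_mul_inv]
  exact mul_mem (mul_mem (laurentPolyToFF_mem_laurentRing n) (laurentPolyToFF_mem_laurentRing u))
    (inv_laurentPolyToFF_mem_laurentRing h.2.2.1)

lemma inv_p_mem_laurentRing (i : Fin 2) : (p K i (![ℓ₁, ℓ₂] i))⁻¹ ∈ LaurentRing K ℓ₁ ℓ₂ :=
  Subring.subset_closure (.inr (by fin_cases i <;> simp))

lemma inv_ev_inr_mem_laurentRing (i : Fin 2) : (ev K (.inr i))⁻¹ ∈ LaurentRing K ℓ₁ ℓ₂ :=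
  Subring.subset_closure (.inr (by fin_cases i <;> simp [x1, x2]))

lemma ev_inr_mem_map_closure (i : Fin 2) :
    ev K (.inr i) ∈ (Submonoid.closure (invertedVars K ℓ₁ ℓ₂)).map (laurentPolyToFF K ℓ₁ ℓ₂) := by
  let v : {v : Vars // IsLaurentVar ℓ₁ ℓ₂ v} := ⟨.inr i, trivial⟩
  exact ⟨MvPolynomial.X v, Submonoid.subset_closure ⟨v, rfl, inv_ev_inr_mem_laurentRing i⟩,
    laurentPolyToFF_X v⟩

end LaurentPoly

section ExchangeData

variable (K : Type) [Field K] (ℓ₁ ℓ₂ : ℕ)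

/-- The coefficient of `z ^ t` in `P_{i+1}(z)`, as a polynomial. -/
def coeffPoly (i : Fin 2) (t : ℕ) : LaurentPoly K ℓ₁ ℓ₂ :=
  if h : 1 ≤ t ∧ t ≤ ![ℓ₁, ℓ₂] i then MvPolynomial.X ⟨.inl (i, t), h⟩ else if t = 0 then 1 else 0

def exchDeg (a b : Fin 2) (κ : ℕ) : ℕ := ![ℓ₁, ℓ₂] (exchIndex a b κ)

/-- The coefficients of `exchRhs`, multiplied by `p_{i+1,ℓ_{i+1}}` in the case `P̄_{i+1}` so as
to be polynomials. -/
def exchCoeff (a b : Fin 2) (κ j : ℕ) : LaurentPoly K ℓ₁ ℓ₂ :=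
  if κ % 4 < 2 then coeffPoly K ℓ₁ ℓ₂ (exchIndex a b κ) j
  else coeffPoly K ℓ₁ ℓ₂ (exchIndex a b κ) (exchDeg ℓ₁ ℓ₂ a b κ - j)

variable {K ℓ₁ ℓ₂}

lemma laurentPolyToFF_coeffPoly_zero (i : Fin 2) :
    laurentPolyToFF K ℓ₁ ℓ₂ (coeffPoly K ℓ₁ ℓ₂ i 0) = 1 := by
  simp [coeffPoly]

lemma laurentPolyToFF_coeffPoly {i : Fin 2} {t : ℕ} (ht : 1 ≤ t ∧ t ≤ ![ℓ₁, ℓ₂] i) :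
    laurentPolyToFF K ℓ₁ ℓ₂ (coeffPoly K ℓ₁ ℓ₂ i t) = p K i t := by
  simp [coeffPoly, ht, p]

lemma sum_coeffPoly (i : Fin 2) (z : FF K) :
    ∑ j ∈ range (![ℓ₁, ℓ₂] i + 1), laurentPolyToFF K ℓ₁ ℓ₂ (coeffPoly K ℓ₁ ℓ₂ i j) * z ^ j =
      exchPoly K ℓ₁ ℓ₂ i z := by
  rw [sum_range_succ', laurentPolyToFF_coeffPoly_zero, exchPoly, ← Ico_add_one_right_eq_Icc,
    sum_Ico_eq_sum_range, Nat.add_sub_cancel, pow_zero, one_mul, add_comm]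
  refine congrArg _ (sum_congr rfl fun j hj => ?_)
  rw [add_comm 1 j, laurentPolyToFF_coeffPoly ⟨by omega, by have := mem_range.mp hj; omega⟩]

lemma sum_coeffPoly_reverse (i : Fin 2) {z : FF K} (hz : z ≠ 0) :
    ∑ j ∈ range (![ℓ₁, ℓ₂] i + 1),
        laurentPolyToFF K ℓ₁ ℓ₂ (coeffPoly K ℓ₁ ℓ₂ i (![ℓ₁, ℓ₂] i - j)) * z ^ j =
      p K i (![ℓ₁, ℓ₂] i) * exchPolyBar K ℓ₁ ℓ₂ i z := by
  rw [sum_range_reflect_mul_pow (fun t => laurentPolyToFF K ℓ₁ ℓ₂ (coeffPoly K ℓ₁ ℓ₂ i t)) _ hz,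
    sum_coeffPoly, exchPolyBar, ← mul_assoc, ← mul_assoc, mul_inv_cancel₀ (ev_ne_zero _), one_mul]

lemma exchIndex_add_two (a b : Fin 2) (κ : ℕ) : exchIndex a b (κ + 2) = exchIndex a b κ := by
  simp [exchIndex, Nat.add_mod_right]

lemma exchDeg_add_two (a b : Fin 2) (κ : ℕ) :
    exchDeg ℓ₁ ℓ₂ a b (κ + 2) = exchDeg ℓ₁ ℓ₂ a b κ := by
  rw [exchDeg, exchDeg, exchIndex_add_two]

lemma exchCoeff_add_two (a b : Fin 2) (κ : ℕ) {j : ℕ} (hj : j ≤ exchDeg ℓ₁ ℓ₂ a b κ) :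
    exchCoeff K ℓ₁ ℓ₂ a b (κ + 2) j = exchCoeff K ℓ₁ ℓ₂ a b κ (exchDeg ℓ₁ ℓ₂ a b κ - j) := by
  rw [exchCoeff, exchCoeff, exchDeg_add_two, exchIndex_add_two, Nat.sub_sub_self hj]
  by_cases h : κ % 4 < 2
  · rw [if_neg (by omega), if_pos h]
  · rw [if_pos (by omega), if_neg h]

lemma exchCoeff_zero_mem_closure (hℓ : ∀ i, 1 ≤ ![ℓ₁, ℓ₂] i) (a b : Fin 2) (κ : ℕ) :
    exchCoeff K ℓ₁ ℓ₂ a b κ 0 ∈ Submonoid.closure (invertedVars K ℓ₁ ℓ₂) := by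
  unfold exchCoeff
  split_ifs
  · simp [coeffPoly]
  · exact Submonoid.subset_closure ⟨⟨.inl (exchIndex a b κ, exchDeg ℓ₁ ℓ₂ a b κ), hℓ _, le_rfl⟩,
      by simp [exchDeg, coeffPoly, hℓ], inv_p_mem_laurentRing _⟩

lemma sum_exchCoeff (hℓ : ∀ i, 1 ≤ ![ℓ₁, ℓ₂] i) (a b : Fin 2) (κ : ℕ) {z : FF K}
    (hz : z ≠ 0) :
    ∑ j ∈ range (exchDeg ℓ₁ ℓ₂ a b κ + 1),
        laurentPolyToFF K ℓ₁ ℓ₂ (exchCoeff K ℓ₁ ℓ₂ a b κ j) * z ^ j =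
      laurentPolyToFF K ℓ₁ ℓ₂ (exchCoeff K ℓ₁ ℓ₂ a b κ 0) * exchRhs K ℓ₁ ℓ₂ a b κ z := by
  unfold exchCoeff exchRhs exchDeg
  split_ifs
  · rw [sum_coeffPoly, laurentPolyToFF_coeffPoly_zero, one_mul]
  · rw [sum_coeffPoly_reverse _ hz, Nat.sub_zero,
      laurentPolyToFF_coeffPoly ⟨hℓ _, le_rfl⟩]

theorem IsExchangeSeq.mem_laurentRing [CharZero K] (hℓ : ∀ i, 1 ≤ ![ℓ₁, ℓ₂] i) {a b : Fin 2}
    {y : ℕ → FF K} (hy : IsExchangeSeq K ℓ₁ ℓ₂ a b y) (κ : ℕ) : y κ ∈ LaurentRing K ℓ₁ ℓ₂ := by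
  have hne := fun κ => (hy.mem_subtractionFree_and_ne_zero κ).2
  obtain ⟨n, u, v, h⟩ := exists_isReducedRep laurentPolyToFF_injective
    (fun _ => irreducible_of_mem_invertedVars) (exchCoeff_add_two a b) (exchDeg_add_two a b)
    (exchCoeff_zero_mem_closure hℓ a b) hne
    (fun κ => by rw [sum_exchCoeff hℓ a b _ (hne _), ← hy.2.2 κ]; ring)
    (hy.1 ▸ ev_inr_mem_map_closure a) (hy.2.1 ▸ ev_inr_mem_map_closure b) κ
  exact h.mem_laurentRing

end ExchangeData

/-- Each cluster pre-variable `x_k` (`k ∈ ℤ`) is a Laurent polynomial in `x₁` and `x₂` with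
coefficients in `k[p_{1,1},…,p_{1,ℓ₁},p_{1,ℓ₁}^{-1},p_{2,1},…,p_{2,ℓ₂},p_{2,ℓ₂}^{-1}]`. -/
theorem preVar_mem_laurentRing (K : Type) [Field K] [CharZero K] (ℓ₁ ℓ₂ : ℕ)
    (hℓ₁ : 1 ≤ ℓ₁) (hℓ₂ : 1 ≤ ℓ₂) (x : ℤ → FF K) (hx : IsPreVarSeq K ℓ₁ ℓ₂ x) :
    ∀ k : ℤ, x k ∈ LaurentRing K ℓ₁ ℓ₂ := by
  have hℓ : ∀ i, 1 ≤ ![ℓ₁, ℓ₂] i := Fin.forall_fin_two.mpr ⟨hℓ₁, hℓ₂⟩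
  intro k
  rcases le_or_gt 1 k with hk | hk
  · obtain ⟨n, rfl⟩ : ∃ n : ℕ, k = n + 1 := ⟨(k - 1).toNat, by omega⟩
    exact hx.isExchangeSeq_succ.mem_laurentRing hℓ n
  · obtain ⟨n, rfl⟩ : ∃ n : ℕ, k = 2 - n := ⟨(2 - k).toNat, by omega⟩
    exact hx.isExchangeSeq_two_sub.mem_laurentRing hℓ n

end GCA
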